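/- There exists an absolute constant c > 0 such that the following holds. Under the SIM, let P⊥ := Iₙ − xxᵀ. Conditioned on any realization of (y₁,…,y_m) satisfying (1/m) Σᵢ yᵢ² ≤ 2ξ², for any ε > 0, with conditional probability at least 1 − 2n e^{−cε} one has ‖(1/m) Σᵢ yᵢ P⊥ aᵢ‖_∞ ≤ ξ √ε / √m, where ‖·‖_∞ denotes the entrywise maximum absolute value. -/

import Mathlib

/-!
For a fixed weight vector `w`, the `j`-th coordinate of `(1/m) Σᵢ wᵢ P⊥ aᵢ` equals
`Σᵢ (wᵢ/m) ⟪P⊥ eⱼ, aᵢ⟫`, a linear functional of independent standard Gaussian vectors. It is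
therefore sub-Gaussian with variance proxy `(Σᵢ wᵢ²/m²) ‖P⊥ eⱼ‖² ≤ 2ξ²/m`, since `P⊥` is a
contraction. The Chernoff bound on both tails, `2 exp (-t² m / (4ξ²))` at `t = ξ √ε / √m`, and a
union bound over the `n` coordinates give the claim with `c = 1/4`.
-/

open MeasureTheory ProbabilityTheory
open scoped RealInnerProductSpace

/-- The standard Gaussian measure `N(0, Iₙ)` on `EuclideanSpace ℝ (Fin n)`. -/
noncomputable def stdGaussianE (n : ℕ) : Measure (EuclideanSpace ℝ (Fin n)) :=
  (Measure.pi fun _ : Fin n => gaussianReal 0 1).map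
    (MeasurableEquiv.toLp 2 (Fin n → ℝ))

open scoped NNReal

lemma stdGaussianE_eq_stdGaussian (n : ℕ) :
    stdGaussianE n = stdGaussian (EuclideanSpace ℝ (Fin n)) :=
  map_pi_eq_stdGaussian

section Projection

variable {E : Type*} [NormedAddCommGroup E] [InnerProductSpace ℝ E]

lemma inner_sub_inner_smul_comm (x v y : E) :
    ⟪v - ⟪v, x⟫ • x, y⟫ = ⟪y - ⟪y, x⟫ • x, v⟫ := by
  simp only [inner_sub_left, real_inner_smul_right, real_inner_comm]
  ring

lemma norm_sub_inner_smul_le {x : E} (hx : ‖x‖ = 1) (y : E) : ‖y - ⟪y, x⟫ • x‖ ≤ ‖y‖ := by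
  have h : ‖y - ⟪y, x⟫ • x‖ ^ 2 = ‖y‖ ^ 2 - ⟪y, x⟫ ^ 2 := by
    rw [norm_sub_sq_real, real_inner_smul_right, norm_smul, hx, Real.norm_eq_abs, mul_one, sq_abs]
    ring
  exact pow_le_pow_iff_left₀ (norm_nonneg _) (norm_nonneg _) two_ne_zero |>.1 (by nlinarith)

end Projection

namespace ProbabilityTheory.HasSubgaussianMGF

variable {Ω : Type*} [MeasurableSpace Ω] {μ : Measure Ω} {X : Ω → ℝ} {c : ℝ≥0}

lemma mono (h : HasSubgaussianMGF X c μ) {c' : ℝ≥0} (hc : c ≤ c') :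
    HasSubgaussianMGF X c' μ where
  integrable_exp_mul := h.integrable_exp_mul
  mgf_le t := (h.mgf_le t).trans <| Real.exp_le_exp.2 <| by gcongr

lemma measureReal_abs_gt_le [IsFiniteMeasure μ] (h : HasSubgaussianMGF X c μ) {t : ℝ}
    (ht : 0 ≤ t) : μ.real {ω | t < |X ω|} ≤ 2 * Real.exp (-t ^ 2 / (2 * c)) := by
  have hsub : {ω | t < |X ω|} ⊆ {ω | t ≤ X ω} ∪ {ω | t ≤ (-X) ω} := fun ω hω => by
    rcases le_abs'.1 (show t < |X ω| from hω).le with h | h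
    · exact Or.inr (by simp only [Set.mem_ofPred_eq, Pi.neg_apply]; linarith)
    · exact Or.inl h
  calc μ.real {ω | t < |X ω|} ≤ μ.real {ω | t ≤ X ω} + μ.real {ω | t ≤ (-X) ω} :=
        (measureReal_mono hsub).trans (measureReal_union_le _ _)
    _ ≤ _ := by linarith [h.measure_ge_le ht, h.neg.measure_ge_le ht]

lemma sum_pi {ι : Type*} [Fintype ι] {Ω : ι → Type*} [∀ i, MeasurableSpace (Ω i)]
    {μ : ∀ i, Measure (Ω i)} [∀ i, IsProbabilityMeasure (μ i)] {X : ∀ i, Ω i → ℝ}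
    {c : ι → ℝ≥0} (h : ∀ i, HasSubgaussianMGF (X i) (c i) (μ i)) :
    HasSubgaussianMGF (fun ω => ∑ i, X i (ω i)) (∑ i, c i) (Measure.pi μ) := by
  refine sum_of_iIndepFun (iIndepFun_pi fun i => (h i).aemeasurable) fun i _ => ?_
  refine of_map (X := X i) (measurable_pi_apply i).aemeasurable ?_
  rw [(measurePreserving_eval μ i).map_eq]
  exact h i

end ProbabilityTheory.HasSubgaussianMGF

namespace ProbabilityTheory

lemma hasSubgaussianMGF_id_gaussianReal (v : ℝ≥0) :
    HasSubgaussianMGF id v (gaussianReal 0 v) where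
  integrable_exp_mul := integrable_exp_mul_gaussianReal
  mgf_le t := by simp [mgf_id_gaussianReal]

variable {E : Type*} [NormedAddCommGroup E] [InnerProductSpace ℝ E] [FiniteDimensional ℝ E]
  [MeasurableSpace E] [BorelSpace E]

lemma map_innerSL_stdGaussian (u : E) :
    (stdGaussian E).map (innerSL ℝ u) = gaussianReal 0 (‖u‖₊ ^ 2) := by
  rw [IsGaussian.map_eq_gaussianReal, integral_strongDual_stdGaussian,
    variance_dual_stdGaussian, innerSL_apply_norm]
  congr
  ext
  simp

lemma hasSubgaussianMGF_inner_stdGaussian (u : E) :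
    HasSubgaussianMGF (fun v => ⟪u, v⟫) (‖u‖₊ ^ 2) (stdGaussian E) := by
  have h := hasSubgaussianMGF_id_gaussianReal (‖u‖₊ ^ 2)
  rw [← map_innerSL_stdGaussian] at h
  exact (HasSubgaussianMGF.id_map_iff (innerSL ℝ u).measurable.aemeasurable).1 h

lemma hasSubgaussianMGF_sum_mul_inner_proj {ι : Type*} [Fintype ι] {x : E} (hx : ‖x‖ = 1)
    (w : ι → ℝ) (y : E) :
    HasSubgaussianMGF (fun v : ι → E => ∑ i, w i * ⟪v i - ⟪v i, x⟫ • x, y⟫)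
      ((∑ i, ‖w i‖₊ ^ 2) * ‖y‖₊ ^ 2) (Measure.pi fun _ => stdGaussian E) := by
  have h := HasSubgaussianMGF.sum_pi (μ := fun _ => stdGaussian E)
    fun i => hasSubgaussianMGF_inner_stdGaussian (w i • (y - ⟪y, x⟫ • x))
  have hZ (v : ι → E) : ∑ i, ⟪w i • (y - ⟪y, x⟫ • x), v i⟫ = ∑ i, w i * ⟪v i - ⟪v i, x⟫ • x, y⟫ :=
    Finset.sum_congr rfl fun i _ => by rw [real_inner_smul_left, inner_sub_inner_smul_comm]
  refine (h.congr (ae_of_all _ hZ)).mono ?_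
  rw [Finset.sum_mul]
  gcongr with i
  rw [nnnorm_smul, mul_pow]
  gcongr
  exact norm_sub_inner_smul_le hx y

lemma measureReal_exists_abs_sum_mul_proj_apply_gt_le {n : ℕ} {ι : Type*} [Fintype ι]
    {x : EuclideanSpace ℝ (Fin n)} (hx : ‖x‖ = 1) (w : ι → ℝ) {B : ℝ≥0}
    (hB : ∑ i, w i ^ 2 ≤ B) {t : ℝ} (ht : 0 ≤ t) :
    (Measure.pi fun _ : ι => stdGaussian (EuclideanSpace ℝ (Fin n))).real
        {v | ∃ j, t < |∑ i, w i * (v i - ⟪v i, x⟫ • x) j|}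
      ≤ 2 * n * Real.exp (-t ^ 2 / (2 * B)) := by
  have hcoord (u : EuclideanSpace ℝ (Fin n)) (j : Fin n) :
      u j = ⟪u, EuclideanSpace.single j 1⟫ := by
    simp [EuclideanSpace.inner_single_right]
  have htail (j : Fin n) : (Measure.pi fun _ : ι => stdGaussian (EuclideanSpace ℝ (Fin n))).real
      {v | t < |∑ i, w i * (v i - ⟪v i, x⟫ • x) j|} ≤ 2 * Real.exp (-t ^ 2 / (2 * B)) := by
    simp_rw [hcoord _ j]
    refine ((hasSubgaussianMGF_sum_mul_inner_proj hx w _).mono ?_).measureReal_abs_gt_le ht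
    rw [← NNReal.coe_le_coe]
    simpa using hB
  rw [Set.ofPred_exists]
  refine (measureReal_iUnion_fintype_le _).trans ?_
  refine (Finset.sum_le_sum fun j _ => htail j).trans ?_
  rw [Finset.sum_const, Finset.card_univ, Fintype.card_fin, nsmul_eq_mul]
  exact le_of_eq (by ring)

lemma measurableSet_forall_abs_avg_proj_apply_le {n m : ℕ} (x : EuclideanSpace ℝ (Fin n))
    (w : Fin m → ℝ) (t : ℝ) :
    MeasurableSet {v : Fin m → EuclideanSpace ℝ (Fin n) |
      ∀ j : Fin n, |(m : ℝ)⁻¹ * ∑ i, w i * (v i - ⟪v i, x⟫ • x) j| ≤ t} := by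
  simp only [Set.ofPred_forall]
  exact .iInter fun j => measurableSet_le (by fun_prop) measurable_const

lemma one_sub_le_measureReal_forall_abs_avg_proj_apply_le {n m : ℕ} (hm : 0 < m)
    {x : EuclideanSpace ℝ (Fin n)} (hx : ‖x‖ = 1) {ξ : ℝ} (hξ : 0 ≤ ξ) {w : Fin m → ℝ}
    (hw : (m : ℝ)⁻¹ * ∑ i, w i ^ 2 ≤ 2 * ξ ^ 2) {ε : ℝ} (hε : 0 < ε) :
    1 - 2 * n * Real.exp (-(1 / 4 * ε)) ≤
      (Measure.pi fun _ : Fin m => stdGaussian (EuclideanSpace ℝ (Fin n))).real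
        {v | ∀ j : Fin n, |(m : ℝ)⁻¹ * ∑ i, w i * (v i - ⟪v i, x⟫ • x) j|
          ≤ ξ * Real.sqrt ε / Real.sqrt m} := by
  have hm' : (0 : ℝ) < m := Nat.cast_pos.2 hm
  set t := ξ * Real.sqrt ε / Real.sqrt m
  set S := {v : Fin m → EuclideanSpace ℝ (Fin n) |
    ∀ j : Fin n, |(m : ℝ)⁻¹ * ∑ i, w i * (v i - ⟪v i, x⟫ • x) j| ≤ t}
  rcases hξ.eq_or_lt with rfl | hξ
  · have hsum : ∑ i, w i ^ 2 = 0 :=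
      le_antisymm (by simpa [hm'.ne'] using mul_le_mul_of_nonneg_left hw hm'.le) (by positivity)
    have hw0 (i : Fin m) : w i = 0 := by
      simpa using (Finset.sum_eq_zero_iff_of_nonneg fun i _ => sq_nonneg (w i)).1 hsum i
        (Finset.mem_univ i)
    have hSuniv : S = Set.univ := Set.eq_univ_of_forall fun v j => by simp [t, hw0]
    rw [hSuniv, probReal_univ]
    linarith [show 0 ≤ 2 * (n : ℝ) * Real.exp (-(1 / 4 * ε)) by positivity]
  · have hSc : Sᶜ = {v | ∃ j, t < |∑ i, ((m : ℝ)⁻¹ * w i) * (v i - ⟪v i, x⟫ • x) j|} := by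
      ext v
      simp [S, Finset.mul_sum, mul_assoc]
    have hB : ∑ i, ((m : ℝ)⁻¹ * w i) ^ 2 ≤ ((2 * ξ ^ 2 / m).toNNReal : ℝ) := by
      rw [Real.coe_toNNReal _ (by positivity)]
      calc ∑ i, ((m : ℝ)⁻¹ * w i) ^ 2 = (m : ℝ)⁻¹ * ((m : ℝ)⁻¹ * ∑ i, w i ^ 2) := by
            simp_rw [mul_pow, ← Finset.mul_sum]; ring
        _ ≤ (m : ℝ)⁻¹ * (2 * ξ ^ 2) := by gcongr
        _ = 2 * ξ ^ 2 / m := by ring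
    have hexp : -t ^ 2 / (2 * ((2 * ξ ^ 2 / m).toNNReal : ℝ)) = -(1 / 4 * ε) := by
      rw [Real.coe_toNNReal _ (by positivity), div_pow, mul_pow, Real.sq_sqrt hε.le,
        Real.sq_sqrt hm'.le]
      field_simp
      ring
    have htail := measureReal_exists_abs_sum_mul_proj_apply_gt_le hx _ hB
      (by positivity : 0 ≤ t)
    rw [← hSc, hexp, probReal_compl_eq_one_sub (measurableSet_forall_abs_avg_proj_apply_le x w t)]
      at htail
    linarith

end ProbabilityTheory

/-- There is an absolute constant `c > 0` such that, under the SIM,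
conditioned on any realization `w = (w₁, …, w_m)` of `(y₁, …, y_m)` satisfying
`(1/m) Σᵢ wᵢ² ≤ 2ξ²`, for any `ε > 0`, with conditional probability at least `1 − 2n e^{−cε}`
one has `‖(1/m) Σᵢ wᵢ P⊥ aᵢ‖_∞ ≤ ξ √ε / √m`, where `P⊥ aᵢ = aᵢ − ⟨aᵢ, x⟩ x` and `‖·‖_∞` is
the entrywise maximum absolute value (expressed entrywise below). -/
theorem stmt11 :
    ∃ c : ℝ, 0 < c ∧
      ∀ (Ω Θ : Type) (_ : MeasurableSpace Ω) (_ : MeasurableSpace Θ)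
        (P : Measure Ω) (_ : IsProbabilityMeasure P)
        (κ : Measure Θ) (_ : IsProbabilityMeasure κ)
        (n m : ℕ) (_ : 0 < m)
        (a : Fin m → Ω → EuclideanSpace ℝ (Fin n)) (_ : ∀ i, Measurable (a i))
        -- the aᵢ are i.i.d. standard Gaussian vectors N(0, Iₙ)
        (_ : Measure.map (fun ω => fun i => a i ω) P
          = Measure.pi fun _ : Fin m => stdGaussianE n)
        (x : EuclideanSpace ℝ (Fin n)) (_ : ‖x‖ = 1)
        (F : Θ → ℝ → ℝ) (_ : Measurable (Function.uncurry F))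
        (ξ : ℝ) (_ : 0 ≤ ξ)
        -- ξ² := E[f(g)²]
        (_ : ξ ^ 2 = ∫ p : Θ × ℝ, (F p.1 p.2) ^ 2 ∂(κ.prod (gaussianReal 0 1)))
        -- w is a realization of (y₁, …, y_m) satisfying (1/m) Σᵢ wᵢ² ≤ 2ξ²
        (w : Fin m → ℝ) (_ : (m : ℝ)⁻¹ * ∑ i, (w i) ^ 2 ≤ 2 * ξ ^ 2)
        (ε : ℝ) (_ : 0 < ε),
        (P {ω | ∀ j : Fin n,
            abs ((m : ℝ)⁻¹ * ∑ i, w i * (a i ω - ⟪a i ω, x⟫ • x) j)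
              ≤ ξ * Real.sqrt ε / Real.sqrt m}).toReal
          ≥ 1 - 2 * n * Real.exp (-(c * ε)) := by
  refine ⟨1 / 4, by norm_num, ?_⟩
  intro Ω Θ _ _ P _ _ _ n m hm a ha hmap x hx _ _ ξ hξ _ w hw ε hε
  simp_rw [stdGaussianE_eq_stdGaussian] at hmap
  refine ge_iff_le.2 <|
    (one_sub_le_measureReal_forall_abs_avg_proj_apply_le hm hx hξ hw hε).trans ?_
  rw [← hmap, measureReal_def, Measure.map_apply (measurable_pi_lambda _ ha)
    (measurableSet_forall_abs_avg_proj_apply_le x w _)]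
  rfl
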